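/- Let M > 1, A > 1, and integers n > m ≥ 2. Then A^{2/n} < A^{2/m}, M^{n/(n−2)} < M^{m/(m−2)} (with the convention M^{m/(m−2)} = ∞ for m = 2), and if additionally MA > A^{2/m} then (M A^{2/n} − A)/(MA − A^{2/n}) < (M A^{2/m} − A)/(MA − A^{2/m}). Consequently the instability regions satisfy U_n ⊂ U_m for n > m ≥ 2, where U_m = {(A,B) : 1 < A < M^{m/(m−2)} and 0 < B < (M A^{2/m} − A)/(MA − A^{2/m})}. -/
import Mathlib


open Real

/-- The instability region of mode `m` for the target equilibrium:
`U_m = {(A,B) : 1 < A < M^{m/(m−2)}, 0 < B < (M A^{2/m} − A)/(MA − A^{2/m})}`,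
with the convention `M^{m/(m-2)} = ∞` for `m = 2`. -/
def instabilityRegion (M : ℝ) (m : ℕ) : Set (ℝ × ℝ) :=
  {p | 1 < p.1 ∧ (m = 2 ∨ p.1 < M ^ ((m : ℝ) / ((m : ℝ) - 2)))
      ∧ 0 < p.2
      ∧ p.2 < (M * p.1 ^ ((2 : ℝ) / (m : ℝ)) - p.1) / (M * p.1 - p.1 ^ ((2 : ℝ) / (m : ℝ)))}

private lemma aux_pow_lt (A : ℝ) (hA : 1 < A) (m n : ℕ) (hm : 2 ≤ m) (hmn : m < n) :
    A ^ ((2 : ℝ) / (n : ℝ)) < A ^ ((2 : ℝ) / (m : ℝ)) := by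
  have hm0 : (0:ℝ) < m := by positivity
  have hmn' : (m:ℝ) < n := by exact_mod_cast hmn
  exact (Real.rpow_lt_rpow_left_iff hA).mpr (div_lt_div_of_pos_left two_pos hm0 hmn')

private lemma aux_frac_lt (M A : ℝ) (hM : 1 < M) (hA : 1 < A) (m n : ℕ)
    (hm : 2 ≤ m) (hmn : m < n) :
    (M * A ^ ((2 : ℝ) / (n : ℝ)) - A) / (M * A - A ^ ((2 : ℝ) / (n : ℝ)))
      < (M * A ^ ((2 : ℝ) / (m : ℝ)) - A) / (M * A - A ^ ((2 : ℝ) / (m : ℝ))) := by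
  set x := A ^ ((2 : ℝ) / (n : ℝ)) with hxdef
  set y := A ^ ((2 : ℝ) / (m : ℝ)) with hydef
  have hxy : x < y := aux_pow_lt A hA m n hm hmn
  have hm0 : (0:ℝ) < m := by positivity
  have hyA : y ≤ A := by
    have : (2:ℝ)/(m:ℝ) ≤ 1 := by
      rw [div_le_one hm0]; exact_mod_cast hm
    calc y ≤ A ^ (1:ℝ) := (Real.rpow_le_rpow_left_iff hA).mpr this
      _ = A := Real.rpow_one A
  have hdy : 0 < M * A - y := by nlinarith
  have hdx : 0 < M * A - x := by linarith
  rw [div_lt_div_iff₀ hdx hdy]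
  nlinarith [mul_pos (mul_pos (by nlinarith : (0:ℝ) < A)
    (by nlinarith : (0:ℝ) < M*M - 1)) (by linarith : (0:ℝ) < y - x)]

private lemma aux_exp_lt (m n : ℕ) (hm : 2 < m) (hmn : m < n) :
    (n : ℝ) / ((n : ℝ) - 2) < (m : ℝ) / ((m : ℝ) - 2) := by
  have hm' : (2:ℝ) < m := by exact_mod_cast hm
  have hmn' : (m:ℝ) < n := by exact_mod_cast hmn
  rw [div_lt_div_iff₀ (by linarith) (by linarith)]
  nlinarith

/-- Monotonicity of the instability regions: for `n > m ≥ 2`, `U_n ⊆ U_m`. -/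
theorem instability_regions_nested
    (M A : ℝ) (hM : 1 < M) (hA : 1 < A) (m n : ℕ) (hm : 2 ≤ m) (hmn : m < n) :
    A ^ ((2 : ℝ) / (n : ℝ)) < A ^ ((2 : ℝ) / (m : ℝ))
    ∧ (2 < m → M ^ ((n : ℝ) / ((n : ℝ) - 2)) < M ^ ((m : ℝ) / ((m : ℝ) - 2)))
    ∧ (A ^ ((2 : ℝ) / (m : ℝ)) < M * A →
        (M * A ^ ((2 : ℝ) / (n : ℝ)) - A) / (M * A - A ^ ((2 : ℝ) / (n : ℝ)))
          < (M * A ^ ((2 : ℝ) / (m : ℝ)) - A) / (M * A - A ^ ((2 : ℝ) / (m : ℝ))))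
    ∧ instabilityRegion M n ⊆ instabilityRegion M m := by
  refine ⟨aux_pow_lt A hA m n hm hmn,
    fun h => (Real.rpow_lt_rpow_left_iff hM).mpr (aux_exp_lt m n h hmn),
    fun _ => aux_frac_lt M A hM hA m n hm hmn, ?_⟩
  rintro ⟨a, b⟩ ⟨ha1, hn2, hb0, hb⟩
  refine ⟨ha1, ?_, hb0, hb.trans (aux_frac_lt M a hM ha1 m n hm hmn)⟩
  rcases Nat.lt_or_ge m 3 with h | h
  · left; omega
  · right
    rcases hn2 with h2 | hlt
    · omega
    · exact hlt.trans ((Real.rpow_lt_rpow_left_iff hM).mpr (aux_exp_lt m n (by omega) hmn))
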